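/- arXiv:1911.05657 — 3 statements merged into one kernel-verified Lean document; each statement's English description precedes it below -/
import Mathlib

section
/- Let X be a Banach space and β : [0,∞) → [0,∞) a function such that for every separable subspace S of X there is a norm ‖·‖_S on S which is 2-equivalent to the original norm and whose relative asymptotic modulus ϑ̄_{‖·‖_S} satisfies ϑ̄_{‖·‖_S}(t) ≥ β(t) for all t. Then for every λ > 1 there exists a 2-equivalent norm |||·||| on all of X such that ϑ̄_{|||·|||}(t) ≥ β(t/λ) for all t > 0. -/
open MeasureTheory Filter Set Metric
open scoped Pointwise ENNReal

noncomputable section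

section Defs

variable (X : Type*) [NormedAddCommGroup X] [NormedSpace ℝ X]

/-- The Rademacher functions on `[0,1]`. -/
def rademacher (k : ℕ) (t : ℝ) : ℝ := if Int.fract (2 ^ k * t) < 1 / 2 then 1 else -1

variable {X}

/-- The `L¹` Rademacher average `∫₀¹ ‖∑ₖ rₖ(t) xₖ‖ dt` of a finite sequence. -/
def radAvg {n : ℕ} (x : Fin n → X) : ℝ :=
  ∫ t in Icc (0 : ℝ) 1, ‖∑ k : Fin n, rademacher (k : ℕ) t • x k‖

variable (X)

/-- `N` is a norm on `X`. -/
structure IsNormOn (N : X → ℝ) : Prop where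
  add_le : ∀ x y, N (x + y) ≤ N x + N y
  smul_eq : ∀ (c : ℝ) (x : X), N (c • x) = |c| * N x
  eq_zero : ∀ x, N x = 0 → x = 0

variable {X}

/-- `N` is `γ`-equivalent to the original norm. -/
def EquivNorm (γ : ℝ) (N : X → ℝ) : Prop :=
  ∀ x, γ⁻¹ * ‖x‖ ≤ N x ∧ N x ≤ γ * ‖x‖

/-- The relative modulus of convexity `ϑ_N` (separation in the ambient norm). -/
def relConvMod (N : X → ℝ) (t : ℝ) : ℝ :=
  1 - (1 / 2) * sSup {r | ∃ x y, N x = 1 ∧ N y = 1 ∧ ‖x - y‖ > t ∧ r = N (x + y)}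

/-- The modulus of uniform convexity `δ_N`. -/
def convMod (N : X → ℝ) (t : ℝ) : ℝ :=
  1 - (1 / 2) * sSup {r | ∃ x y, N x = 1 ∧ N y = 1 ∧ N (x - y) > t ∧ r = N (x + y)}

/-- `u` converges weakly to `x`. -/
def WeakConvSeq (u : ℕ → X) (x : X) : Prop :=
  ∀ φ : X →L[ℝ] ℝ, Tendsto (fun n => φ (u n)) atTop (nhds (φ x))

/-- The relative asymptotic modulus `ϑ̄_N` (separation in the ambient norm). -/
def relAsympMod (N : X → ℝ) (t : ℝ) : ℝ :=
  1 - sSup {r | ∃ x : X, r = N x ∧ ∃ u : ℕ → X, WeakConvSeq u x ∧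
    (∀ n, N (u n) ≤ 1) ∧ sInf {d | ∃ n m : ℕ, n ≠ m ∧ d = ‖u n - u m‖} > t}

/-- `Y` is a finite-codimensional subspace. -/
def FiniteCodim (Y : Subspace ℝ X) : Prop := FiniteDimensional ℝ (X ⧸ Y)

/-- The modulus of asymptotic uniform convexity `δ̄_N`. -/
def asympConvMod (N : X → ℝ) (t : ℝ) : ℝ :=
  sInf {r | ∃ x, N x = 1 ∧ r = sSup {s | ∃ Y : Subspace ℝ X, FiniteCodim Y ∧
    s = sInf {v | ∃ y, y ∈ Y ∧ N y = 1 ∧ v = N (x + t • y) - 1}}}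

end Defs

/-!
The glued norm `|||z|||` is the limit superior of `𝒩 S z` along the separable subspaces `S ∋ z`,
directed by inclusion; it inherits the norm axioms and the equivalence constant. Let `x` be the
weak limit of a sequence `(uₙ)` with `|||uₙ||| ≤ 1` and separation `> t`, and let `1 < a ≤ λ`.
The countably many `uₙ` together with `x` lie in a separable subspace `T` beyond which every
`𝒩 S uₙ` is below `a`. For separable `S ⊇ T`, Hahn–Banach gives `uₙ ⇀ x` in `S`, and `a⁻¹ uₙ` is
an `𝒩 S`-normalized sequence with separation `> t / a ≥ t / λ`, so `𝒩 S x ≤ a (1 - β (t / λ))`.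
Hence `|||x||| ≤ a (1 - β (t / λ))`, and we let `a → 1`.
-/

open TopologicalSpace

section RelAsympMod

variable {E : Type*} [NormedAddCommGroup E]

def separation (u : ℕ → E) : ℝ := sInf {d | ∃ n m : ℕ, n ≠ m ∧ d = ‖u n - u m‖}

lemma lt_separation_iff {u : ℕ → E} {t : ℝ} :
    t < separation u ↔ ∃ δ, t < δ ∧ ∀ n m : ℕ, n ≠ m → δ ≤ ‖u n - u m‖ := by
  constructor
  · refine fun ht => ⟨_, ht, fun n m hnm => csInf_le ⟨0, ?_⟩ ⟨n, m, hnm, rfl⟩⟩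
    rintro d ⟨n, m, -, rfl⟩
    exact norm_nonneg _
  · rintro ⟨δ, htδ, hδ⟩
    refine htδ.trans_le (le_csInf ⟨_, 0, 1, zero_ne_one, rfl⟩ ?_)
    rintro d ⟨n, m, hnm, rfl⟩
    exact hδ n m hnm

variable [NormedSpace ℝ E]

def relAsympSet (N : E → ℝ) (t : ℝ) : Set ℝ :=
  {r | ∃ x : E, r = N x ∧ ∃ u : ℕ → E, WeakConvSeq u x ∧ (∀ n, N (u n) ≤ 1) ∧ t < separation u}

lemma relAsympMod_eq (N : E → ℝ) (t : ℝ) : relAsympMod N t = 1 - sSup (relAsympSet N t) := rfl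

lemma IsNormOn.nonneg {N : E → ℝ} (hN : IsNormOn E N) (x : E) : 0 ≤ N x := by
  have h := hN.add_le x (-x)
  rw [add_neg_cancel, ← neg_one_smul ℝ x, hN.smul_eq, ← zero_smul ℝ x, hN.smul_eq] at h
  simp only [abs_neg, abs_one, one_mul, abs_zero, zero_mul] at h
  linarith

lemma WeakConvSeq.norm_le {u : ℕ → E} {x : E} (h : WeakConvSeq u x) {C : ℝ}
    (hC : ∀ n, ‖u n‖ ≤ C) : ‖x‖ ≤ C := by
  obtain ⟨g, hg, hgx⟩ := exists_dual_vector'' ℝ x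
  rw [show ‖x‖ = g x by simp [hgx]]
  refine le_of_tendsto (h g) (Eventually.of_forall fun n => ?_)
  calc g (u n) ≤ ‖g (u n)‖ := Real.le_norm_self _
    _ ≤ ‖g‖ * ‖u n‖ := g.le_opNorm _
    _ ≤ 1 * C := mul_le_mul hg (hC n) (norm_nonneg _) zero_le_one
    _ = C := one_mul C

lemma WeakConvSeq.const_smul {u : ℕ → E} {x : E} (h : WeakConvSeq u x) (c : ℝ) :
    WeakConvSeq (fun n => c • u n) (c • x) := fun φ => by
  simpa only [map_smul, smul_eq_mul] using (h φ).const_mul c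

lemma WeakConvSeq.codRestrict {S : Subspace ℝ E} {u : ℕ → E} {x : E} (h : WeakConvSeq u x)
    (hu : ∀ n, u n ∈ S) (hx : x ∈ S) :
    WeakConvSeq (fun n => (⟨u n, hu n⟩ : S)) ⟨x, hx⟩ := fun φ => by
  obtain ⟨g, hg, -⟩ := exists_extension_norm_eq S φ
  simp only [← hg]
  exact h g

lemma bddAbove_relAsympSet {N : E → ℝ} {γ : ℝ} (hγ : 0 < γ) (he : EquivNorm γ N) (t : ℝ) :
    BddAbove (relAsympSet N t) := by
  refine ⟨γ * γ, ?_⟩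
  rintro r ⟨x, rfl, u, hw, hu, -⟩
  have huγ : ∀ n, ‖u n‖ ≤ γ := fun n => by
    have := (he (u n)).1.trans (hu n)
    rwa [inv_mul_le_iff₀ hγ, mul_one] at this
  exact (he x).2.trans (mul_le_mul_of_nonneg_left (hw.norm_le huγ) hγ.le)

lemma relAsympMod_le_one {N : E → ℝ} (hN : IsNormOn E N) (t : ℝ) : relAsympMod N t ≤ 1 := by
  have : 0 ≤ sSup (relAsympSet N t) :=
    Real.sSup_nonneg fun r ⟨x, hr, _⟩ => hr ▸ hN.nonneg x
  rw [relAsympMod_eq]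
  linarith

lemma le_relAsympMod {N : E → ℝ} {t b : ℝ} (hb : b ≤ 1)
    (h : ∀ (x : E) (u : ℕ → E), WeakConvSeq u x → (∀ n, N (u n) ≤ 1) → t < separation u →
      N x ≤ 1 - b) :
    b ≤ relAsympMod N t := by
  have : sSup (relAsympSet N t) ≤ 1 - b :=
    Real.sSup_le (fun r ⟨x, hr, u, hw, hu, hsep⟩ => hr ▸ h x u hw hu hsep) (by linarith)
  rw [relAsympMod_eq]
  linarith

lemma le_one_sub_relAsympMod {N : E → ℝ} {γ : ℝ} (hγ : 0 < γ) (he : EquivNorm γ N)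
    {u : ℕ → E} {x : E} (hw : WeakConvSeq u x) (hu : ∀ n, N (u n) ≤ 1) {t : ℝ}
    (hsep : t < separation u) :
    N x ≤ 1 - relAsympMod N t := by
  have := le_csSup (bddAbove_relAsympSet hγ he t) ⟨x, rfl, u, hw, hu, hsep⟩
  rw [relAsympMod_eq]
  linarith

lemma le_mul_one_sub_relAsympMod {N : E → ℝ} {γ : ℝ} (hγ : 0 < γ) (hN : IsNormOn E N)
    (he : EquivNorm γ N) {u : ℕ → E} {x : E} (hw : WeakConvSeq u x) {a : ℝ} (ha : 0 < a)
    (hu : ∀ n, N (u n) ≤ a) {s : ℝ} (hsep : a * s < separation u) :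
    N x ≤ a * (1 - relAsympMod N s) := by
  obtain ⟨δ, hδ, hδu⟩ := lt_separation_iff.mp hsep
  have ha' : 0 < a⁻¹ := inv_pos.mpr ha
  have hscaled : N (a⁻¹ • x) ≤ 1 - relAsympMod N s := by
    refine le_one_sub_relAsympMod hγ he (hw.const_smul a⁻¹) (fun n => ?_) ?_
    · rw [hN.smul_eq, abs_of_pos ha', inv_mul_le_iff₀ ha, mul_one]
      exact hu n
    · refine lt_separation_iff.mpr ⟨a⁻¹ * δ, by rwa [lt_inv_mul_iff₀ ha], fun n m hnm => ?_⟩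
      rw [← smul_sub, norm_smul, Real.norm_of_nonneg ha'.le]
      exact mul_le_mul_of_nonneg_left (hδu n m hnm) ha'.le
  rwa [hN.smul_eq, abs_of_pos ha', inv_mul_le_iff₀ ha] at hscaled

end RelAsympMod

section Separable

variable {R M : Type*} [Semiring R] [TopologicalSpace R] [SeparableSpace R] [AddCommMonoid M]
  [Module R M] [TopologicalSpace M] [ContinuousAdd M] [ContinuousSMul R M]

lemma Submodule.isSeparable_sup {S T : Submodule R M} (hS : IsSeparable (S : Set M))
    (hT : IsSeparable (T : Set M)) : IsSeparable ((S ⊔ T : Submodule R M) : Set M) := by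
  rw [← S.span_eq, ← T.span_eq, ← Submodule.span_union]
  exact (hS.union hT).span

lemma Submodule.isSeparable_iSup {ι : Type*} [Countable ι] {S : ι → Submodule R M}
    (hS : ∀ i, IsSeparable (S i : Set M)) : IsSeparable ((⨆ i, S i : Submodule R M) : Set M) := by
  rw [Submodule.iSup_eq_span]
  exact (isSeparable_iUnion.mpr hS).span

end Separable

section Glue

variable {X : Type*} [NormedAddCommGroup X] [NormedSpace ℝ X]

def eventualBounds (𝒩 : ∀ S : Subspace ℝ X, S → ℝ) (z : X) : Set ℝ :=
  {b | ∃ S₀ : Subspace ℝ X, IsSeparable (S₀ : Set X) ∧ z ∈ S₀ ∧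
    ∀ S : Subspace ℝ X, S₀ ≤ S → IsSeparable (S : Set X) → ∀ hz : z ∈ S, 𝒩 S ⟨z, hz⟩ ≤ b}

def glueNorm (𝒩 : ∀ S : Subspace ℝ X, S → ℝ) (z : X) : ℝ := sInf (eventualBounds 𝒩 z)

variable {𝒩 : ∀ S : Subspace ℝ X, S → ℝ} {γ : ℝ}

lemma eventualBounds_mono {z : X} {b b' : ℝ} (hb : b ∈ eventualBounds 𝒩 z) (hbb' : b ≤ b') :
    b' ∈ eventualBounds 𝒩 z :=
  let ⟨S₀, hS₀, hz, hbound⟩ := hb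
  ⟨S₀, hS₀, hz, fun S hS₀S hS hzS => (hbound S hS₀S hS hzS).trans hbb'⟩

lemma add_mem_eventualBounds
    (hnorm : ∀ S : Subspace ℝ X, IsSeparable (S : Set X) → IsNormOn S (𝒩 S))
    {x y : X} {a b : ℝ} (ha : a ∈ eventualBounds 𝒩 x) (hb : b ∈ eventualBounds 𝒩 y) :
    a + b ∈ eventualBounds 𝒩 (x + y) := by
  obtain ⟨S₀, hS₀, hx, hax⟩ := ha
  obtain ⟨S₁, hS₁, hy, hby⟩ := hb
  refine ⟨S₀ ⊔ S₁, Submodule.isSeparable_sup hS₀ hS₁,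
    add_mem (Submodule.mem_sup_left hx) (Submodule.mem_sup_right hy), fun S hS₀₁S hS _ => ?_⟩
  have hxS : x ∈ S := hS₀₁S (Submodule.mem_sup_left hx)
  have hyS : y ∈ S := hS₀₁S (Submodule.mem_sup_right hy)
  calc 𝒩 S ⟨x + y, _⟩ = 𝒩 S (⟨x, hxS⟩ + ⟨y, hyS⟩) := rfl
    _ ≤ 𝒩 S ⟨x, hxS⟩ + 𝒩 S ⟨y, hyS⟩ := (hnorm S hS).add_le _ _
    _ ≤ a + b := add_le_add (hax S (le_sup_left.trans hS₀₁S) hS hxS)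
        (hby S (le_sup_right.trans hS₀₁S) hS hyS)

lemma smul_mem_eventualBounds
    (hnorm : ∀ S : Subspace ℝ X, IsSeparable (S : Set X) → IsNormOn S (𝒩 S))
    {z : X} {b : ℝ} (hb : b ∈ eventualBounds 𝒩 z) (c : ℝ) :
    |c| * b ∈ eventualBounds 𝒩 (c • z) := by
  obtain ⟨S₀, hS₀, hz, hbz⟩ := hb
  refine ⟨S₀, hS₀, S₀.smul_mem c hz, fun S hS₀S hS _ => ?_⟩
  calc 𝒩 S ⟨c • z, _⟩ = 𝒩 S (c • ⟨z, hS₀S hz⟩) := rfl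
    _ = |c| * 𝒩 S ⟨z, hS₀S hz⟩ := (hnorm S hS).smul_eq _ _
    _ ≤ |c| * b := mul_le_mul_of_nonneg_left (hbz S hS₀S hS _) (abs_nonneg c)

section Equiv

variable (hequiv : ∀ S : Subspace ℝ X, IsSeparable (S : Set X) → EquivNorm γ (𝒩 S))
include hequiv

lemma mul_norm_mem_eventualBounds (z : X) : γ * ‖z‖ ∈ eventualBounds 𝒩 z :=
  ⟨ℝ ∙ z, (countable_singleton z).isSeparable.span, Submodule.mem_span_singleton_self z,
    fun S _ hS hz => (hequiv S hS ⟨z, hz⟩).2⟩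

lemma inv_mul_norm_le_of_mem_eventualBounds {z : X} {b : ℝ} (hb : b ∈ eventualBounds 𝒩 z) :
    γ⁻¹ * ‖z‖ ≤ b :=
  let ⟨S₀, hS₀, hz, hbz⟩ := hb
  (hequiv S₀ hS₀ ⟨z, hz⟩).1.trans (hbz S₀ le_rfl hS₀ hz)

lemma bddBelow_eventualBounds (z : X) : BddBelow (eventualBounds 𝒩 z) :=
  ⟨γ⁻¹ * ‖z‖, fun _ hb => inv_mul_norm_le_of_mem_eventualBounds hequiv hb⟩

lemma glueNorm_le {z : X} {b : ℝ} (hb : b ∈ eventualBounds 𝒩 z) : glueNorm 𝒩 z ≤ b :=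
  csInf_le (bddBelow_eventualBounds hequiv z) hb

lemma mem_eventualBounds_of_glueNorm_lt {z : X} {b : ℝ} (h : glueNorm 𝒩 z < b) :
    b ∈ eventualBounds 𝒩 z :=
  let ⟨_, hb', hb'b⟩ := exists_lt_of_csInf_lt ⟨_, mul_norm_mem_eventualBounds hequiv z⟩ h
  eventualBounds_mono hb' hb'b.le

lemma glueNorm_equivNorm : EquivNorm γ (glueNorm 𝒩) := fun z =>
  ⟨le_csInf ⟨_, mul_norm_mem_eventualBounds hequiv z⟩
    fun _ hb => inv_mul_norm_le_of_mem_eventualBounds hequiv hb,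
   glueNorm_le hequiv (mul_norm_mem_eventualBounds hequiv z)⟩

variable (hnorm : ∀ S : Subspace ℝ X, IsSeparable (S : Set X) → IsNormOn S (𝒩 S))
include hnorm

lemma glueNorm_add_le (x y : X) : glueNorm 𝒩 (x + y) ≤ glueNorm 𝒩 x + glueNorm 𝒩 y := by
  have hx : (eventualBounds 𝒩 x).Nonempty := ⟨_, mul_norm_mem_eventualBounds hequiv x⟩
  have hy : (eventualBounds 𝒩 y).Nonempty := ⟨_, mul_norm_mem_eventualBounds hequiv y⟩
  rw [glueNorm, glueNorm, glueNorm, ← csInf_add hx (bddBelow_eventualBounds hequiv x) hy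
    (bddBelow_eventualBounds hequiv y)]
  refine csInf_le_csInf (bddBelow_eventualBounds hequiv _) (hx.add hy) ?_
  rintro _ ⟨a, ha, b, hb, rfl⟩
  exact add_mem_eventualBounds hnorm ha hb

lemma glueNorm_smul_le (c : ℝ) (z : X) : glueNorm 𝒩 (c • z) ≤ |c| * glueNorm 𝒩 z := by
  have hz : (eventualBounds 𝒩 z).Nonempty := ⟨_, mul_norm_mem_eventualBounds hequiv z⟩
  rw [glueNorm, glueNorm, ← smul_eq_mul, ← Real.sInf_smul_of_nonneg (abs_nonneg c)]
  refine csInf_le_csInf (bddBelow_eventualBounds hequiv _) (hz.smul_set) ?_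
  rintro _ ⟨b, hb, rfl⟩
  exact smul_mem_eventualBounds hnorm hb c

lemma glueNorm_isNormOn (hγ : 0 < γ) : IsNormOn X (glueNorm 𝒩) where
  add_le := glueNorm_add_le hequiv hnorm
  smul_eq c z := by
    refine le_antisymm (glueNorm_smul_le hequiv hnorm c z) ?_
    rcases eq_or_ne c 0 with rfl | hc
    · simpa using (glueNorm_equivNorm hequiv ((0 : ℝ) • z)).1
    · have := glueNorm_smul_le hequiv hnorm c⁻¹ (c • z)
      rwa [inv_smul_smul₀ hc, abs_inv, le_inv_mul_iff₀ (abs_pos.mpr hc)] at this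
  eq_zero z hz := by
    by_contra hz0
    have := (glueNorm_equivNorm hequiv z).1
    have := mul_pos (inv_pos.mpr hγ) (norm_pos_iff.mpr hz0)
    linarith

lemma glueNorm_le_mul_of_weakConvSeq (hγ : 0 < γ) {u : ℕ → X} {x : X} (hw : WeakConvSeq u x)
    {a s b : ℝ} (ha : 0 < a) (hu : ∀ n, glueNorm 𝒩 (u n) < a)
    (hsep : a * s < separation u)
    (hmod : ∀ S : Subspace ℝ X, IsSeparable (S : Set X) → b ≤ relAsympMod (𝒩 S) s) :
    glueNorm 𝒩 x ≤ a * (1 - b) := by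
  choose S₀ hS₀ huS₀ hbound using fun n => mem_eventualBounds_of_glueNorm_lt hequiv (hu n)
  set T : Subspace ℝ X := (ℝ ∙ x) ⊔ ⨆ n, S₀ n
  have hT : IsSeparable (T : Set X) := Submodule.isSeparable_sup
    (countable_singleton x).isSeparable.span (Submodule.isSeparable_iSup hS₀)
  have hS₀T : ∀ n, S₀ n ≤ T := fun n => (le_iSup S₀ n).trans le_sup_right
  refine glueNorm_le hequiv ⟨T, hT, Submodule.mem_sup_left (Submodule.mem_span_singleton_self x),
    fun S hTS hS hxS => ?_⟩
  have huS : ∀ n, u n ∈ S := fun n => hTS (hS₀T n (huS₀ n))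
  calc 𝒩 S ⟨x, hxS⟩ ≤ a * (1 - relAsympMod (𝒩 S) s) :=
        le_mul_one_sub_relAsympMod hγ (hnorm S hS) (hequiv S hS) (hw.codRestrict huS hxS) ha
          (fun n => hbound n S ((hS₀T n).trans hTS) hS (huS n)) hsep
    _ ≤ a * (1 - b) := by gcongr; exact hmod S hS

lemma le_relAsympMod_glueNorm (hγ : 0 < γ) {t lam b : ℝ} (ht : 0 ≤ t) (hlam : 1 < lam)
    (hb : b ≤ 1)
    (hmod : ∀ S : Subspace ℝ X, IsSeparable (S : Set X) → b ≤ relAsympMod (𝒩 S) (t / lam)) :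
    b ≤ relAsympMod (glueNorm 𝒩) t := by
  refine le_relAsympMod hb fun x u hw hu hsep =>
    (le_iff_forall_one_lt_le_mul₀ (sub_nonneg.mpr hb)).mpr fun a ha => ?_
  have ha' : 1 < min a lam := lt_min ha hlam
  have hsep' : min a lam * (t / lam) < separation u := by
    refine lt_of_le_of_lt ?_ hsep
    calc min a lam * (t / lam) ≤ lam * (t / lam) := by gcongr; exact min_le_right a lam
      _ = t := mul_div_cancel₀ t (by positivity)
  calc glueNorm 𝒩 x ≤ min a lam * (1 - b) :=
        glueNorm_le_mul_of_weakConvSeq hequiv hnorm hγ hw (by positivity)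
          (fun n => (hu n).trans_lt ha') hsep' hmod
    _ ≤ (1 - b) * a := by
        rw [mul_comm]
        exact mul_le_mul_of_nonneg_left (min_le_left a lam) (sub_nonneg.mpr hb)

end Equiv

end Glue

theorem stmt1_general {X : Type*} [NormedAddCommGroup X] [NormedSpace ℝ X]
    (β : ℝ → ℝ)
    (hS : ∀ S : Subspace ℝ X, TopologicalSpace.IsSeparable (S : Set X) →
      ∃ N : S → ℝ, IsNormOn S N ∧ EquivNorm 2 N ∧ ∀ t : ℝ, 0 < t → relAsympMod N t ≥ β t) :
    ∀ lam : ℝ, 1 < lam → ∃ N : X → ℝ, IsNormOn X N ∧ EquivNorm 2 N ∧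
      ∀ t : ℝ, 0 < t → relAsympMod N t ≥ β (t / lam) := by
  intro lam hlam
  choose! 𝒩 hnorm hequiv hmod using hS
  refine ⟨glueNorm 𝒩, glueNorm_isNormOn hequiv hnorm two_pos, glueNorm_equivNorm hequiv,
    fun t ht => ?_⟩
  have htlam : 0 < t / lam := div_pos ht (zero_lt_one.trans hlam)
  have hbot : IsSeparable ((⊥ : Subspace ℝ X) : Set X) := by
    simpa only [Submodule.bot_coe] using (countable_singleton (0 : X)).isSeparable
  have hβ1 : β (t / lam) ≤ 1 :=
    (hmod ⊥ hbot (t / lam) htlam).trans (relAsympMod_le_one (hnorm ⊥ hbot) _)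
  exact le_relAsympMod_glueNorm hequiv hnorm two_pos ht.le hlam hβ1
    fun S hS => hmod S hS (t / lam) htlam

/-- gluing AUC renormings of separable subspaces. -/
theorem stmt1 {X : Type*} [NormedAddCommGroup X] [NormedSpace ℝ X] [CompleteSpace X]
    (β : ℝ → ℝ) (hβ : ∀ t, 0 ≤ t → 0 ≤ β t)
    (hS : ∀ S : Subspace ℝ X, TopologicalSpace.IsSeparable (S : Set X) →
      ∃ N : S → ℝ, IsNormOn S N ∧ EquivNorm 2 N ∧ ∀ t : ℝ, 0 < t → relAsympMod N t ≥ β t) :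
    ∀ lam : ℝ, 1 < lam → ∃ N : X → ℝ, IsNormOn X N ∧ EquivNorm 2 N ∧
      ∀ t : ℝ, 0 < t → relAsympMod N t ≥ β (t / lam) :=
  stmt1_general β hS
end
end

section
/- Let X be a super-reflexive Banach space with 𝔔_X(ε) as above. If φ is a convex normalized cotype of X, then φ(t) ≤ (𝔔_X(t) − 1)⁻¹ for every t ∈ (0,1). -/
open MeasureTheory Filter Set Metric
open scoped Pointwise ENNReal

noncomputable section

section Helpers
open intervalIntegral

lemma rad_meas (k : ℕ) : Measurable (rademacher k) := by
  unfold rademacher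
  exact Measurable.ite (measurableSet_lt (Measurable.fract (measurable_const_mul _)) measurable_const) measurable_const measurable_const

lemma rad_abs (k : ℕ) (t : ℝ) : |rademacher k t| = 1 := by
  unfold rademacher; split <;> simp

lemma rad_sq (k : ℕ) (t : ℝ) : rademacher k t * rademacher k t = 1 := by
  unfold rademacher; split <;> norm_num

lemma rad_zero_pow (k : ℕ) (t : ℝ) : rademacher k t = rademacher 0 (2 ^ k * t) := by
  unfold rademacher; norm_num

lemma rad_shift (k j : ℕ) (t : ℝ) : rademacher (j + k) t = rademacher j (2 ^ k * t) := by
  unfold rademacher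
  rw [show (2:ℝ) ^ j * (2 ^ k * t) = 2 ^ (j + k) * t by ring]

lemma rad_periodic (k : ℕ) : Function.Periodic (rademacher k) 1 := by
  intro t
  unfold rademacher
  rw [mul_add, mul_one, show (2:ℝ)^k = ((2^k : ℤ) : ℝ) by push_cast; ring, Int.fract_add_intCast]

lemma rad_intble (k : ℕ) (a b : ℝ) : IntervalIntegrable (rademacher k) volume a b := by
  apply IntervalIntegrable.mono_fun (_root_.intervalIntegrable_const (c := (1:ℝ)))
  · exact (rad_meas k).aestronglyMeasurable
  · filter_upwards with t
    simp [Real.norm_eq_abs, rad_abs]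

lemma rad_half (m : ℕ) (hm : 1 ≤ m) (u : ℝ) : rademacher m (u + 1/2) = rademacher m u := by
  unfold rademacher
  rw [mul_add, show (2:ℝ)^m * (1/2) = ((2^(m-1) : ℤ) : ℝ) by
    push_cast
    rw [show m = (m-1) + 1 by omega]
    ring_nf
    simp, Int.fract_add_intCast]

lemma ae_ne (c : ℝ) : ∀ᵐ u : ℝ, u ≠ c := by
  have := (Set.countable_singleton c).ae_notMem (volume : Measure ℝ)
  filter_upwards [this] with u hu
  simpa using hu

lemma rad_zero_eval_lo {u : ℝ} (h0 : 0 ≤ u) (h1 : u < 1/2) : rademacher 0 u = 1 := by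
  unfold rademacher
  rw [pow_zero, one_mul, if_pos]
  rwa [Int.fract_eq_self.2 ⟨h0, by linarith⟩]

lemma rad_zero_eval_hi {u : ℝ} (h0 : 1/2 ≤ u) (h1 : u < 1) : rademacher 0 u = -1 := by
  unfold rademacher
  rw [pow_zero, one_mul, if_neg]
  rw [Int.fract_eq_self.2 ⟨by linarith, h1⟩]
  linarith

lemma key_m (m : ℕ) (hm : 1 ≤ m) :
    (∫ u in (0:ℝ)..1, rademacher 0 u * rademacher m u) = 0 := by
  have hint : ∀ (j : ℕ) (a b : ℝ), IntervalIntegrable (fun u => rademacher 0 u * rademacher j u) volume a b := by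
    intro j a b
    apply IntervalIntegrable.mono_fun (_root_.intervalIntegrable_const (c := (1:ℝ)))
    · exact ((rad_meas 0).mul (rad_meas j)).aestronglyMeasurable
    · filter_upwards with t
      simp [Real.norm_eq_abs, abs_mul, rad_abs]
  have hsplit : (∫ u in (0:ℝ)..1, rademacher 0 u * rademacher m u)
      = (∫ u in (0:ℝ)..(1/2), rademacher 0 u * rademacher m u)
        + ∫ u in (1/2:ℝ)..1, rademacher 0 u * rademacher m u :=
    (integral_add_adjacent_intervals (hint m 0 (1/2)) (hint m (1/2) 1)).symm
  have h1 : (∫ u in (0:ℝ)..(1/2), rademacher 0 u * rademacher m u)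
      = ∫ u in (0:ℝ)..(1/2), rademacher m u := by
    apply intervalIntegral.integral_congr_ae
    filter_upwards [ae_ne (1/2 : ℝ)] with u hu hmem
    rw [Set.uIoc_of_le (by norm_num : (0:ℝ) ≤ 1/2)] at hmem
    rw [rad_zero_eval_lo hmem.1.le (lt_of_le_of_ne hmem.2 hu), one_mul]
  have h2 : (∫ u in (1/2:ℝ)..1, rademacher 0 u * rademacher m u)
      = ∫ u in (1/2:ℝ)..1, -rademacher m u := by
    apply intervalIntegral.integral_congr_ae
    filter_upwards [ae_ne (1 : ℝ)] with u hu hmem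
    rw [Set.uIoc_of_le (by norm_num : (1/2:ℝ) ≤ 1)] at hmem
    rw [rad_zero_eval_hi hmem.1.le (lt_of_le_of_ne hmem.2 hu), neg_one_mul]
  have h3 : (∫ u in (1/2:ℝ)..1, rademacher m u) = ∫ u in (0:ℝ)..(1/2), rademacher m u := by
    have e := integral_comp_add_right (a := (0:ℝ)) (b := 1/2) (fun u => rademacher m u) (1/2)
    rw [show (0:ℝ)+1/2 = 1/2 by norm_num, show (1:ℝ)/2+1/2 = 1 by norm_num] at e
    rw [← e]
    apply integral_congr
    intro u _
    exact rad_half m hm u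
  rw [hsplit, h1, h2, intervalIntegral.integral_neg, h3]
  ring

lemma rad_orth {k j : ℕ} (hkj : k < j) :
    (∫ t in (0:ℝ)..1, rademacher k t * rademacher j t) = 0 := by
  set m := j - k with hmdef
  have hm : 1 ≤ m := by omega
  set g : ℝ → ℝ := fun u => rademacher 0 u * rademacher m u with hg
  have hper : Function.Periodic g 1 := fun u => by
    simp only [hg, rad_periodic 0 u, rad_periodic m u]
  have hgint : ∀ a b : ℝ, IntervalIntegrable g volume a b := by
    intro a b
    apply IntervalIntegrable.mono_fun (_root_.intervalIntegrable_const (c := (1:ℝ)))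
    · exact ((rad_meas 0).mul (rad_meas m)).aestronglyMeasurable
    · filter_upwards with t
      simp [hg, Real.norm_eq_abs, abs_mul, rad_abs]
  have heq : ∀ t : ℝ, rademacher k t * rademacher j t = g (2 ^ k * t) := by
    intro t
    simp only [hg]
    rw [← rad_zero_pow, ← rad_shift k m t]
    congr 2
    omega
  have h2k : (2:ℝ) ^ k ≠ 0 := by positivity
  rw [intervalIntegral.integral_congr (g := fun t => g (2 ^ k * t)) (fun t _ => heq t),
    intervalIntegral.integral_comp_mul_left g h2k]
  have hz := hper.intervalIntegral_add_zsmul_eq ((2:ℕ)^k : ℤ) 0 hgint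
  simp only [zsmul_eq_mul, Int.cast_pow, Int.cast_ofNat, zero_add] at hz
  push_cast at hz
  rw [mul_one] at hz
  rw [mul_zero, mul_one, hz, key_m m hm]
  simp

lemma rad_orth' (k j : ℕ) :
    (∫ t in (0:ℝ)..1, rademacher k t * rademacher j t) = if k = j then 1 else 0 := by
  rcases lt_trichotomy k j with h | h | h
  · rw [if_neg h.ne, rad_orth h]
  · subst h
    rw [if_pos rfl, intervalIntegral.integral_congr (g := fun _ => (1:ℝ))
      (fun t _ => rad_sq k t)]
    simp
  · rw [if_neg h.ne', intervalIntegral.integral_congr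
      (g := fun t => rademacher j t * rademacher k t) (fun t _ => mul_comm _ _), rad_orth h]

lemma rad_orth_set (k j : ℕ) :
    (∫ t in Icc (0:ℝ) 1, rademacher k t * rademacher j t) = if k = j then 1 else 0 := by
  rw [MeasureTheory.integral_Icc_eq_integral_Ioc,
    ← intervalIntegral.integral_of_le (by norm_num : (0:ℝ) ≤ 1), rad_orth' k j]

variable {X : Type*} [NormedAddCommGroup X] [NormedSpace ℝ X] [CompleteSpace X]

lemma rad_extract {n : ℕ} (x : Fin n → X) (k : Fin n) :
    (∫ t in Icc (0:ℝ) 1, rademacher (k : ℕ) t • (∑ j : Fin n, rademacher (j : ℕ) t • x j)) = x k := by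
  have heq : ∀ t : ℝ, rademacher (k : ℕ) t • (∑ j : Fin n, rademacher (j : ℕ) t • x j)
      = ∑ j : Fin n, (rademacher (k : ℕ) t * rademacher (j : ℕ) t) • x j := by
    intro t
    rw [Finset.smul_sum]
    exact Finset.sum_congr rfl fun j _ => smul_smul _ _ _
  rw [show (fun t => rademacher (k : ℕ) t • (∑ j : Fin n, rademacher (j : ℕ) t • x j))
      = fun t => ∑ j : Fin n, (rademacher (k : ℕ) t * rademacher (j : ℕ) t) • x j from funext heq]
  rw [MeasureTheory.integral_finset_sum]
  · have : ∀ j : Fin n, (∫ t in Icc (0:ℝ) 1, (rademacher (k : ℕ) t * rademacher (j : ℕ) t) • x j)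
        = (if (k : ℕ) = (j : ℕ) then (1:ℝ) else 0) • x j := by
      intro j
      rw [_root_.integral_smul_const, rad_orth_set]
    simp only [this]
    simp [Fin.val_inj]
  · intro j _
    constructor
    · exact (((rad_meas (k:ℕ)).mul (rad_meas (j:ℕ))).aestronglyMeasurable).smul_const _
    · apply MeasureTheory.HasFiniteIntegral.of_bounded (C := ‖x j‖)
      filter_upwards with t
      rw [norm_smul, Real.norm_eq_abs, abs_mul, rad_abs, rad_abs, one_mul, one_mul]

lemma norm_le_radAvg {n : ℕ} (x : Fin n → X) (k : Fin n) : ‖x k‖ ≤ radAvg x := by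
  rw [← rad_extract x k]
  refine le_trans (MeasureTheory.norm_integral_le_integral_norm _) (le_of_eq ?_)
  unfold radAvg
  congr 1
  funext t
  rw [norm_smul, Real.norm_eq_abs, rad_abs, one_mul]

end Helpers

/-- The defining property of `𝔔_X(ε)`: for all `n ≥ N` and `x₁,…,xₙ` with Rademacher
average at most `1`, one has `∑‖xₖ‖ ≤ ε·n`. -/
def QProp (X : Type*) [NormedAddCommGroup X] [NormedSpace ℝ X] (ε : ℝ) (N : ℕ) : Prop :=
  ∀ n : ℕ, N ≤ n → ∀ x : Fin n → X, radAvg x ≤ 1 → ∑ k, ‖x k‖ ≤ ε * n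

/-- a convex normalized cotype `φ` satisfies `φ(t) ≤ (𝔔_X(t)-1)⁻¹`
for `t ∈ (0,1)`. -/
theorem stmt10 {X : Type*} [NormedAddCommGroup X] [NormedSpace ℝ X] [CompleteSpace X]
    [Nontrivial X]
    (Q : ℝ → ℕ) (hQ : ∀ ε : ℝ, 0 < ε → IsLeast {N : ℕ | QProp X ε N} (Q ε))
    (φ : ℝ → ℝ) (hφ0 : φ 0 = 0) (hφnn : ∀ t ∈ Icc (0 : ℝ) 1, 0 ≤ φ t)
    (hφm : MonotoneOn φ (Icc (0 : ℝ) 1)) (hφc : ConvexOn ℝ (Icc (0 : ℝ) 1) φ)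
    (hnorm : ∀ (n : ℕ) (x : Fin n → X), radAvg x ≤ 1 → ∑ k, φ ‖x k‖ ≤ 1) :
    ∀ t : ℝ, 0 < t → t < 1 → φ t ≤ ((Q t : ℝ) - 1)⁻¹ := by
  intro t ht0 ht1
  obtain ⟨hQmem, hQlb⟩ := hQ t ht0
  -- a unit vector
  obtain ⟨z, hz⟩ := exists_ne (0 : X)
  set x₀ : X := ‖z‖⁻¹ • z with hx₀
  have hx₀1 : ‖x₀‖ = 1 := by
    rw [hx₀, norm_smul, norm_inv, norm_norm, inv_mul_cancel₀ (norm_ne_zero_iff.2 hz)]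
  have hradone : radAvg (fun _ : Fin 1 => x₀) = 1 := by
    unfold radAvg
    have : ∀ s : ℝ, ‖∑ k : Fin 1, rademacher (k : ℕ) s • x₀‖ = 1 := by
      intro s
      rw [Fin.sum_univ_one, norm_smul, Real.norm_eq_abs, rad_abs, one_mul, hx₀1]
    rw [show (fun s => ‖∑ k : Fin 1, rademacher (k : ℕ) s • x₀‖) = fun _ => (1:ℝ) from funext this]
    simp
  have hQ2 : 2 ≤ Q t := by
    by_contra hc
    push_neg at hc
    have h1 : Q t ≤ 1 := by omega
    have := hQmem 1 h1 (fun _ : Fin 1 => x₀) (le_of_eq hradone)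
    rw [Fin.sum_univ_one, hx₀1] at this
    simp only [Nat.cast_one, mul_one] at this
    linarith
  -- Q t - 1 fails QProp
  have hfail : ¬ QProp X t (Q t - 1) := by
    intro h
    have := hQlb h
    omega
  unfold QProp at hfail
  push_neg at hfail
  obtain ⟨m, hmge, x, hrad, hgt⟩ := hfail
  have hm1 : 1 ≤ m := by omega
  have hmpos : (0:ℝ) < m := by exact_mod_cast hm1
  have hxk1 : ∀ k : Fin m, ‖x k‖ ≤ 1 := fun k => (norm_le_radAvg x k).trans hrad
  have hsumφ : ∑ k, φ ‖x k‖ ≤ 1 := hnorm m x hrad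
  set s : ℝ := (m : ℝ)⁻¹ * ∑ k, ‖x k‖ with hs
  have hslt1 : s ≤ 1 := by
    rw [hs]
    rw [inv_mul_le_iff₀ hmpos]
    calc ∑ k, ‖x k‖ ≤ ∑ _k : Fin m, (1:ℝ) := Finset.sum_le_sum fun k _ => hxk1 k
    _ = m := by simp
    _ ≤ (m:ℝ) * 1 := by rw [mul_one]
  have hts : t ≤ s := by
    rw [hs, le_inv_mul_iff₀ hmpos, mul_comm]
    exact hgt.le
  have hjensen : φ s ≤ (m : ℝ)⁻¹ := by
    have hJ := hφc.map_sum_le (t := Finset.univ) (w := fun _ : Fin m => (m:ℝ)⁻¹)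
      (p := fun k => ‖x k‖) (fun _ _ => by positivity)
      (by simp [Finset.sum_const, Finset.card_univ]; field_simp)
      (fun k _ => ⟨norm_nonneg _, hxk1 k⟩)
    have e1 : (∑ k : Fin m, (m:ℝ)⁻¹ • ‖x k‖) = s := by
      rw [hs, Finset.mul_sum]
      simp [smul_eq_mul]
    have e2 : (∑ k : Fin m, (m:ℝ)⁻¹ • φ ‖x k‖) = (m:ℝ)⁻¹ * ∑ k, φ ‖x k‖ := by
      rw [Finset.mul_sum]
      simp [smul_eq_mul]
    rw [e1, e2] at hJ
    calc φ s ≤ (m:ℝ)⁻¹ * ∑ k, φ ‖x k‖ := hJ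
    _ ≤ (m:ℝ)⁻¹ * 1 := by
        apply mul_le_mul_of_nonneg_left hsumφ (by positivity)
    _ = (m:ℝ)⁻¹ := mul_one _
  have hφts : φ t ≤ φ s := hφm ⟨ht0.le, ht1.le⟩ ⟨by linarith, hslt1⟩ hts
  have hcast : ((Q t : ℝ) - 1) = ((Q t - 1 : ℕ) : ℝ) := by
    have : (1:ℕ) ≤ Q t := by omega
    push_cast [this]
    ring
  have hfin : (m:ℝ)⁻¹ ≤ ((Q t : ℝ) - 1)⁻¹ := by
    rw [hcast]
    apply inv_anti₀
    · have : (1:ℕ) ≤ Q t - 1 := by omega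
      exact_mod_cast Nat.lt_of_lt_of_le Nat.zero_lt_one this
    · exact_mod_cast hmge
  linarith
end
end

section
/- Let X be a Banach space admitting an equivalent norm |||·||| whose modulus of convexity satisfies δ_{|||·|||}(t) ≥ c·t^p for some c > 0 and p ≥ 2 on (0,1]. Then every Walsh–Paley martingale (fₙ) with values in the unit ball B_X satisfies ∑ₙ₌₀^∞ ∫₀¹ ‖dfₙ(t)‖^p dt < ∞, where df₀ = f₀ and dfₙ = fₙ − fₙ₋₁. -/
open MeasureTheory Filter Set Metric
open scoped Pointwise ENNReal

noncomputable section

/-!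
The potential `φ = N + N²` is uniformly convex of power type `p` on `{N ≤ γ}`: at the midpoint
`m` of `x` and `y`, `2 φ(m) + κ (N(x - m)^p + N(y - m)^p) ≤ φ(x) + φ(y)`. When `N x` and `N y`
are close the modulus of convexity of `N` provides the gain; when they are far apart the strict
convexity of `t ↦ t²` does. Since `fₙ` is the midpoint of `fₙ₊₁` on each pair of dyadic children,
`∫ φ(fₙ)` grows by at least `κ γ⁻ᵖ ∫ ‖dfₙ₊₁‖^p` at every step while staying below `γ + γ²`,
so the series telescopes.
-/

/-- `a, b` stand for the norms of two points, `r` for half the norm of their sum and `s` for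
half the norm of their difference. -/
lemma potential_gain_of_le {a b s r c p γ κ : ℝ} (hc : 0 ≤ c) (hp : 2 ≤ p) (hb : 0 ≤ b)
    (hba : b ≤ a) (haγ : a ≤ γ) (hs : 0 ≤ s) (hsab : 2 * s ≤ a + b) (hr : 0 ≤ r)
    (hrab : 2 * r ≤ a + b) (hκ₁ : κ ≤ γ ^ (2 - p) / 16) (hκ₂ : κ ≤ c * γ ^ (1 - p) / 2 ^ (p + 1))
    (hconv : 4 * (a - b) < 2 * s → 2 * r ≤ a + b - c * a ^ (1 - p) * (s / 2) ^ p) :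
    2 * (r + r ^ 2) + 2 * κ * s ^ p ≤ a + a ^ 2 + (b + b ^ 2) := by
  have hsq : 2 * r ^ 2 ≤ a ^ 2 + b ^ 2 - (a - b) ^ 2 / 2 := by nlinarith
  rcases hs.eq_or_lt with rfl | hs
  · rw [Real.zero_rpow (by linarith)]
    nlinarith
  have hγ : 0 < γ := by linarith
  rcases le_or_gt (2 * s) (4 * (a - b)) with hfar | hnear
  · have hsp : s ^ p ≤ γ ^ (p - 2) * s ^ 2 := by
      calc s ^ p = s ^ (p - 2) * s ^ (2 : ℝ) := by rw [← Real.rpow_add hs]; ring_nf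
        _ ≤ γ ^ (p - 2) * s ^ 2 := by
          rw [Real.rpow_two]
          gcongr
          linarith
    have hγγ : γ ^ (2 - p) * γ ^ (p - 2) = 1 := by rw [← Real.rpow_add hγ]; simp
    have : 2 * κ * s ^ p ≤ s ^ 2 / 8 := by
      calc 2 * κ * s ^ p ≤ 2 * (γ ^ (2 - p) / 16) * (γ ^ (p - 2) * s ^ 2) := by
            gcongr
        _ = s ^ 2 / 8 := by linear_combination s ^ 2 / 8 * hγγ
    nlinarith
  · have ha : 0 < a := by linarith
    have : 2 * κ * s ^ p ≤ c * a ^ (1 - p) * (s / 2) ^ p := by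
      calc 2 * κ * s ^ p ≤ 2 * (c * γ ^ (1 - p) / 2 ^ (p + 1)) * s ^ p :=
            mul_le_mul_of_nonneg_right (mul_le_mul_of_nonneg_left hκ₂ zero_le_two) (by positivity)
        _ = c * γ ^ (1 - p) * (s / 2) ^ p := by
          rw [Real.div_rpow hs.le zero_le_two, Real.rpow_add two_pos, Real.rpow_one]
          field_simp
        _ ≤ c * a ^ (1 - p) * (s / 2) ^ p := by
          have : γ ^ (1 - p) ≤ a ^ (1 - p) := Real.rpow_le_rpow_of_nonpos ha haγ (by linarith)
          gcongr
    nlinarith [hconv hnear]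

namespace IsNormOn

variable {X : Type*} [NormedAddCommGroup X] [NormedSpace ℝ X] {N : X → ℝ}

lemma map_zero (hN : IsNormOn X N) : N 0 = 0 := by
  simpa using hN.smul_eq 0 0

lemma map_neg (hN : IsNormOn X N) (x : X) : N (-x) = N x := by
  simpa using hN.smul_eq (-1) x

lemma nonneg_s18 (hN : IsNormOn X N) (x : X) : 0 ≤ N x := by
  have h := hN.add_le x (-x)
  rw [add_neg_cancel, hN.map_zero, hN.map_neg] at h
  linarith

lemma map_sub_rev (hN : IsNormOn X N) (x y : X) : N (x - y) = N (y - x) := by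
  rw [← neg_sub, hN.map_neg]

lemma map_sub_le_add (hN : IsNormOn X N) (x y : X) : N (x - y) ≤ N x + N y := by
  simpa [sub_eq_add_neg, hN.map_neg] using hN.add_le x (-y)

lemma map_smul_of_nonneg (hN : IsNormOn X N) {r : ℝ} (hr : 0 ≤ r) (x : X) :
    N (r • x) = r * N x := by
  rw [hN.smul_eq, abs_of_nonneg hr]

variable {c p : ℝ} (hN : IsNormOn X N) (hmod : ∀ t ∈ Ioc (0 : ℝ) 1, convMod N t ≥ c * t ^ p)
include hN hmod

lemma add_le_of_convMod (hp : p ≠ 0) {x y : X} (hx : N x = 1) (hy : N y = 1) :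
    N (x + y) ≤ 2 - 2 * c * (N (x - y) / 2) ^ p := by
  set t := N (x - y) / 2
  rcases (hN.nonneg_s18 (x - y)).eq_or_lt with h0 | hpos
  · have hxy : x = y := sub_eq_zero.1 (hN.eq_zero _ h0.symm)
    simp [t, hxy, hN.map_zero, Real.zero_rpow hp, ← two_smul ℝ y, hN.smul_eq, hy]
  have ht : t ∈ Ioc (0 : ℝ) 1 :=
    ⟨by positivity, by simp only [t]; linarith [hN.map_sub_le_add x y]⟩
  have hmem : N (x + y) ∈ {r | ∃ a b, N a = 1 ∧ N b = 1 ∧ N (a - b) > t ∧ r = N (a + b)} :=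
    ⟨x, y, hx, hy, by simp only [t]; linarith, rfl⟩
  have hbdd : BddAbove {r | ∃ a b, N a = 1 ∧ N b = 1 ∧ N (a - b) > t ∧ r = N (a + b)} := by
    refine ⟨2, ?_⟩
    rintro r ⟨a, b, ha, hb, -, rfl⟩
    linarith [hN.add_le a b]
  have := hmod t ht
  rw [convMod] at this
  linarith [le_csSup hbdd hmem]

lemma add_le_of_convMod_of_eq (hp : p ≠ 0) {M : ℝ} (hM : 0 < M) {x y : X} (hx : N x = M)
    (hy : N y = M) :
    N (x + y) ≤ 2 * M - 2 * c * M ^ (1 - p) * (N (x - y) / 2) ^ p := by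
  have hunit : ∀ z : X, N z = M → N (M⁻¹ • z) = 1 := fun z hz => by
    rw [hN.map_smul_of_nonneg (by positivity), hz, inv_mul_cancel₀ hM.ne']
  have h := hN.add_le_of_convMod hmod hp (hunit x hx) (hunit y hy)
  rw [← smul_add, ← smul_sub, hN.map_smul_of_nonneg (by positivity),
    hN.map_smul_of_nonneg (by positivity), mul_div_assoc, Real.mul_rpow (by positivity)
      (by linarith [hN.nonneg_s18 (x - y)]), Real.inv_rpow hM.le] at h
  have hMp : M ^ (1 - p) = M * (M ^ p)⁻¹ := by rw [Real.rpow_sub hM, Real.rpow_one, div_eq_mul_inv]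
  rw [hMp]
  have := mul_le_mul_of_nonneg_left h hM.le
  rw [← mul_assoc, mul_inv_cancel₀ hM.ne', one_mul] at this
  linarith

/-- Rescale `y` to `y'` on the sphere of radius `N x`: then `x + y` is a convex combination of
`x + y'` and `x`, and inherits the gain of `x + y'`. -/
lemma add_le_of_convMod_of_le (hc : 0 ≤ c) (hp : 0 < p) {x y : X} (hyx : N y ≤ N x)
    (hgap : 4 * (N x - N y) < N (x - y)) :
    N (x + y) ≤ N x + N y - c * N x ^ (1 - p) * (N (x - y) / 4) ^ p := by
  set a := N x
  set b := N y
  have hb : 0 < b := by linarith [hN.map_sub_le_add x y, hN.nonneg_s18 x]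
  have ha : 0 < a := hb.trans_le hyx
  set y' := (a / b) • y
  have hy' : N y' = a := by
    rw [hN.map_smul_of_nonneg (by positivity), div_mul_cancel₀ a hb.ne']
  have hy'y : N (y' - y) = a - b := by
    rw [show y' - y = (a / b - 1) • y by simp [y', sub_smul],
      hN.map_smul_of_nonneg (by rw [sub_nonneg, one_le_div hb]; exact hyx), sub_mul,
      div_mul_cancel₀ a hb.ne', one_mul]
  have hsep : N (x - y) / 4 ≤ N (x - y') / 2 := by
    have := hN.add_le (x - y') (y' - y)
    rw [sub_add_sub_cancel, hy'y] at this
    linarith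
  have hy'gain := hN.add_le_of_convMod_of_eq hmod hp.ne' ha rfl hy'
  have hpow : (N (x - y) / 4) ^ p ≤ (N (x - y') / 2) ^ p :=
    Real.rpow_le_rpow (by linarith [hN.nonneg_s18 (x - y)]) hsep hp.le
  have hcomb : x + y = (b / a) • (x + y') + (1 - b / a) • x := by
    simp only [y', smul_add, smul_smul, sub_smul, one_smul]
    rw [div_mul_div_cancel₀ ha.ne', div_self hb.ne', one_smul]
    abel
  have hconv : N (x + y) ≤ b / a * N (x + y') + (1 - b / a) * a := by
    have := hN.add_le ((b / a) • (x + y')) ((1 - b / a) • x)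
    rwa [← hcomb, hN.map_smul_of_nonneg (by positivity),
      hN.map_smul_of_nonneg (by rw [sub_nonneg, div_le_one ha]; exact hyx)] at this
  have hhalf : 1 / 2 ≤ b / a := by
    rw [div_le_div_iff₀ two_pos ha]; linarith [hN.map_sub_le_add x y]
  have hgain : 0 ≤ c * a ^ (1 - p) * (N (x - y) / 4) ^ p := by
    have := hN.nonneg_s18 (x - y)
    positivity
  have hba : b / a * a = b := div_mul_cancel₀ b ha.ne'
  nlinarith [mul_le_mul_of_nonneg_left hpow (mul_nonneg hc (Real.rpow_nonneg ha.le (1 - p)))]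

lemma exists_midpoint_gain (hc : 0 < c) (hp : 2 ≤ p) {γ : ℝ} (hγ : 0 < γ) :
    ∃ κ > 0, ∀ x y m : X, N x ≤ γ → N y ≤ γ → m = (2 : ℝ)⁻¹ • (x + y) →
      2 * (N m + N m ^ 2) + κ * (N (x - m) ^ p + N (y - m) ^ p) ≤
        N x + N x ^ 2 + (N y + N y ^ 2) := by
  set κ := min (γ ^ (2 - p) / 16) (c * γ ^ (1 - p) / 2 ^ (p + 1))
  have hordered : ∀ u v : X, N v ≤ N u → N u ≤ γ →
      2 * (N (u + v) / 2 + (N (u + v) / 2) ^ 2) + 2 * κ * (N (u - v) / 2) ^ p ≤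
        N u + N u ^ 2 + (N v + N v ^ 2) := fun u v hvu hu =>
    potential_gain_of_le hc.le hp (hN.nonneg_s18 v) hvu hu (by positivity [hN.nonneg_s18 (u - v)])
      (by linarith [hN.map_sub_le_add u v]) (by positivity [hN.nonneg_s18 (u + v)])
      (by linarith [hN.add_le u v]) (min_le_left _ _) (min_le_right _ _) fun hnear => by
        have := hN.add_le_of_convMod_of_le hmod hc.le (by linarith) hvu (by linarith)
        rw [div_div, show (2 : ℝ) * 2 = 4 by norm_num]
        linarith
  refine ⟨κ, by positivity, ?_⟩
  rintro x y m hx hy rfl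
  rw [show x - (2 : ℝ)⁻¹ • (x + y) = (2 : ℝ)⁻¹ • (x - y) by module,
    show y - (2 : ℝ)⁻¹ • (x + y) = -((2 : ℝ)⁻¹ • (x - y)) by module, hN.map_neg]
  simp only [hN.map_smul_of_nonneg (inv_nonneg.2 zero_le_two), inv_mul_eq_div]
  rcases le_total (N y) (N x) with hyx | hxy
  · linarith [hordered x y hyx hx]
  · have := hordered y x hxy hy
    rw [add_comm y x, hN.map_sub_rev y x] at this
    linarith

end IsNormOn

def dyadicIco (n j : ℕ) : Set ℝ := Ico ((j : ℝ) / 2 ^ n) (((j : ℝ) + 1) / 2 ^ n)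

lemma left_mem_dyadicIco (n j : ℕ) : (j : ℝ) / 2 ^ n ∈ dyadicIco n j :=
  ⟨le_rfl, by gcongr; linarith⟩

lemma dyadicIco_subset_Ico {n j : ℕ} (hj : j < 2 ^ n) : dyadicIco n j ⊆ Ico 0 1 := by
  have hj' : (j : ℝ) + 1 ≤ 2 ^ n := by exact_mod_cast hj
  exact Ico_subset_Ico (by positivity) ((div_le_one (by positivity)).2 hj')

lemma dyadicIco_succ_subset (n j : ℕ) : dyadicIco (n + 1) j ⊆ dyadicIco n (j / 2) := by
  have hlo : 2 * ((j / 2 : ℕ) : ℝ) ≤ j := by exact_mod_cast Nat.mul_div_le j 2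
  have hhi : (j : ℝ) + 1 ≤ 2 * (((j / 2 : ℕ) : ℝ) + 1) := by
    exact_mod_cast (by omega : j + 1 ≤ 2 * (j / 2 + 1))
  refine Ico_subset_Ico ?_ ?_
  · rw [pow_succ', ← mul_div_mul_left _ _ two_ne_zero]
    gcongr
  · rw [pow_succ', ← mul_div_mul_left (((j / 2 : ℕ) : ℝ) + 1) _ two_ne_zero]
    gcongr

def dyadicAvg (n : ℕ) (g : ℕ → ℝ) : ℝ := (2 ^ n)⁻¹ * ∑ j ∈ Finset.range (2 ^ n), g j

lemma dyadicAvg_le {n : ℕ} {g : ℕ → ℝ} {B : ℝ} (hg : ∀ j < 2 ^ n, g j ≤ B) : dyadicAvg n g ≤ B := by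
  have := Finset.sum_le_sum fun j hj => hg j (Finset.mem_range.1 hj)
  rw [Finset.sum_const, Finset.card_range, nsmul_eq_mul, Nat.cast_pow, Nat.cast_ofNat] at this
  rw [dyadicAvg, inv_mul_le_iff₀ (by positivity)]
  exact this

lemma sum_range_two_mul {M : Type*} [AddCommMonoid M] (g : ℕ → M) (m : ℕ) :
    ∑ j ∈ Finset.range (2 * m), g j = ∑ q ∈ Finset.range m, (g (2 * q) + g (2 * q + 1)) := by
  induction m with
  | zero => simp
  | succ m ih =>
    rw [Nat.mul_succ, Finset.sum_range_succ, Finset.sum_range_succ, Finset.sum_range_succ, ih,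
      add_assoc]

lemma dyadicAvg_add_le_succ {n : ℕ} {g d h : ℕ → ℝ}
    (hstep : ∀ q < 2 ^ n, 2 * g q + (d (2 * q) + d (2 * q + 1)) ≤ h (2 * q) + h (2 * q + 1)) :
    dyadicAvg n g + dyadicAvg (n + 1) d ≤ dyadicAvg (n + 1) h := by
  have := Finset.sum_le_sum fun q hq => hstep q (Finset.mem_range.1 hq)
  simp only [dyadicAvg, pow_succ', sum_range_two_mul, mul_inv]
  rw [Finset.sum_add_distrib, ← Finset.mul_sum] at this
  have h2n : (0 : ℝ) < 2 ^ n := by positivity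
  field_simp
  linarith

lemma setIntegral_Ico_zero_one_eq_dyadicAvg {n : ℕ} {g : ℝ → ℝ}
    (hg : ∀ j < 2 ^ n, ∀ t ∈ dyadicIco n j, g t = g ((j : ℝ) / 2 ^ n)) :
    ∫ t in Ico (0 : ℝ) 1, g t = dyadicAvg n fun j => g ((j : ℝ) / 2 ^ n) := by
  simp only [dyadicIco] at hg
  have hle : ∀ j : ℕ, (j : ℝ) / 2 ^ n ≤ ((j : ℝ) + 1) / 2 ^ n := fun j => by gcongr; simp
  have hint : ∀ j : ℕ, j < 2 ^ n → IntegrableOn g (Ico ((j : ℝ) / 2 ^ n) (((j : ℝ) + 1) / 2 ^ n)) :=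
    fun j hj => (integrableOn_const measure_Ico_lt_top.ne).congr_fun
      (fun t ht => (hg j hj t ht).symm) measurableSet_Ico
  have hpiece : ∀ j : ℕ, j < 2 ^ n → ∫ t in Ico ((j : ℝ) / 2 ^ n) (((j : ℝ) + 1) / 2 ^ n), g t =
      (2 ^ n)⁻¹ * g (j / 2 ^ n) := by
    intro j hj
    rw [setIntegral_congr_fun measurableSet_Ico (hg j hj), setIntegral_const, smul_eq_mul,
      Real.volume_real_Ico_of_le (hle j)]
    ring
  have hsum := intervalIntegral.sum_integral_adjacent_intervals (μ := volume) (f := g)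
    (a := fun j : ℕ => (j : ℝ) / 2 ^ n) (n := 2 ^ n) fun j hj =>
      (intervalIntegrable_iff_integrableOn_Ico_of_le (by simpa using hle j)).2
        (by simpa using hint j hj)
  simp only [Nat.cast_add, Nat.cast_one, intervalIntegral.integral_of_le (hle _),
    integral_Ioc_eq_integral_Ioo, ← integral_Ico_eq_integral_Ioo, Nat.cast_zero, zero_div,
    Nat.cast_pow, Nat.cast_ofNat, div_self (by positivity : (2 : ℝ) ^ n ≠ 0)] at hsum
  rw [intervalIntegral.integral_of_le zero_le_one, integral_Ioc_eq_integral_Ioo,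
    ← integral_Ico_eq_integral_Ioo] at hsum
  rw [← hsum, dyadicAvg, Finset.mul_sum]
  exact Finset.sum_congr rfl fun j hj => hpiece j (Finset.mem_range.1 hj)

lemma summable_of_add_mul_le_of_le {a Φ : ℕ → ℝ} {κ B : ℝ} (hκ : 0 < κ) (ha : ∀ n, 0 ≤ a n)
    (hstep : ∀ n, Φ n + κ * a n ≤ Φ (n + 1)) (hB : ∀ n, Φ n ≤ B) : Summable a := by
  refine summable_of_sum_range_le ha (c := (B - Φ 0) / κ) fun n => ?_
  have htel : κ * ∑ i ∈ Finset.range n, a i ≤ Φ n - Φ 0 := by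
    rw [Finset.mul_sum, ← Finset.sum_range_sub Φ n]
    exact Finset.sum_le_sum fun i _ => by linarith [hstep i]
  rw [le_div_iff₀ hκ]
  linarith [hB n]

lemma EquivNorm.norm_rpow_le {X : Type*} [NormedAddCommGroup X] [NormedSpace ℝ X] {N : X → ℝ}
    {γ p : ℝ} (he : EquivNorm γ N) (hγ : 0 < γ) (hp : 0 ≤ p) (hN : IsNormOn X N) (z : X) :
    ‖z‖ ^ p ≤ γ ^ p * N z ^ p := by
  rw [← Real.mul_rpow hγ.le (hN.nonneg_s18 z)]
  exact Real.rpow_le_rpow (norm_nonneg z) ((inv_mul_le_iff₀ hγ).1 (he z).1) hp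

section WalshPaley

variable {X : Type*} {f : ℕ → ℝ → X}
  (hconst : ∀ (n j : ℕ), j < 2 ^ n → ∀ s t : ℝ, s ∈ dyadicIco n j → t ∈ dyadicIco n j →
    f n s = f n t)
include hconst

lemma apply_eq_of_mem_dyadicIco_succ {n j : ℕ} (hj : j < 2 ^ (n + 1)) {t : ℝ}
    (ht : t ∈ dyadicIco (n + 1) j) : f n t = f n (((j / 2 : ℕ) : ℝ) / 2 ^ n) :=
  hconst n (j / 2) (by omega) t _ (dyadicIco_succ_subset n j ht) (left_mem_dyadicIco n _)

lemma dyadicAvg_add_integral_le [NormedAddCommGroup X] [NormedSpace ℝ X]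
    (hmart : ∀ (n j : ℕ), j < 2 ^ n → f n ((j : ℝ) / 2 ^ n) = (2 : ℝ)⁻¹ •
      (f (n + 1) ((2 * j : ℝ) / 2 ^ (n + 1)) + f (n + 1) ((2 * j + 1 : ℝ) / 2 ^ (n + 1))))
    {S : Set X} (hS : ∀ n, ∀ t ∈ Ico (0 : ℝ) 1, f n t ∈ S) {φ ψ : X → ℝ}
    (hφψ : ∀ x ∈ S, ∀ y ∈ S, ∀ m, m = (2 : ℝ)⁻¹ • (x + y) →
      2 * φ m + (ψ (x - m) + ψ (y - m)) ≤ φ x + φ y) (n : ℕ) :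
    (dyadicAvg n fun j => φ (f n ((j : ℝ) / 2 ^ n))) + ∫ t in Ico (0 : ℝ) 1, ψ (f (n + 1) t - f n t)
      ≤ dyadicAvg (n + 1) fun j => φ (f (n + 1) ((j : ℝ) / 2 ^ (n + 1))) := by
  have hparent : ∀ j : ℕ, j < 2 ^ (n + 1) →
      f n ((j : ℝ) / 2 ^ (n + 1)) = f n (((j / 2 : ℕ) : ℝ) / 2 ^ n) :=
    fun j hj => apply_eq_of_mem_dyadicIco_succ hconst hj (left_mem_dyadicIco _ _)
  have hmem : ∀ j : ℕ, j < 2 ^ (n + 1) → f (n + 1) ((j : ℝ) / 2 ^ (n + 1)) ∈ S :=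
    fun j hj => hS _ _ (dyadicIco_subset_Ico hj (left_mem_dyadicIco _ _))
  rw [setIntegral_Ico_zero_one_eq_dyadicAvg (n := n + 1) fun j hj t ht => by
    rw [hconst (n + 1) j hj t _ ht (left_mem_dyadicIco _ _),
      apply_eq_of_mem_dyadicIco_succ hconst hj ht, hparent j hj]]
  refine dyadicAvg_add_le_succ fun q hq => ?_
  have h2q : 2 * q < 2 ^ (n + 1) := by rw [pow_succ]; omega
  have h2q1 : 2 * q + 1 < 2 ^ (n + 1) := by rw [pow_succ]; omega
  rw [hparent _ h2q, hparent _ h2q1, show 2 * q / 2 = q by omega,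
    show (2 * q + 1) / 2 = q by omega]
  exact hφψ _ (hmem _ h2q) _ (hmem _ h2q1) _ (by push_cast; exact hmart n q hq)

end WalshPaley

theorem stmt18_general {X : Type*} [NormedAddCommGroup X] [NormedSpace ℝ X]
    (c p : ℝ) (hc : 0 < c) (hp : 2 ≤ p)
    (N : X → ℝ) (hN : IsNormOn X N) (γ : ℝ) (hγ : 1 ≤ γ) (he : EquivNorm γ N)
    (hmod : ∀ t ∈ Ioc (0 : ℝ) 1, convMod N t ≥ c * t ^ p)
    (f : ℕ → ℝ → X)
    -- `fₙ` is constant on the dyadic intervals of generation `n`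
    (hconst : ∀ (n j : ℕ), j < 2 ^ n → ∀ s t : ℝ,
      s ∈ Ico ((j : ℝ) / 2 ^ n) (((j : ℝ) + 1) / 2 ^ n) →
      t ∈ Ico ((j : ℝ) / 2 ^ n) (((j : ℝ) + 1) / 2 ^ n) → f n s = f n t)
    -- the martingale property: `fₙ` is the average of `f_{n+1}` on the two halves
    (hmart : ∀ (n j : ℕ), j < 2 ^ n →
      f n ((j : ℝ) / 2 ^ n) = (2 : ℝ)⁻¹ •
        (f (n + 1) ((2 * j : ℝ) / 2 ^ (n + 1)) + f (n + 1) ((2 * j + 1 : ℝ) / 2 ^ (n + 1))))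
    -- the martingale takes values in the unit ball
    (hball : ∀ n : ℕ, ∀ t ∈ Ico (0 : ℝ) 1, ‖f n t‖ ≤ 1) :
    Summable (fun n : ℕ => ∫ t in Ico (0 : ℝ) 1,
      ‖if n = 0 then f 0 t else f n t - f (n - 1) t‖ ^ p) := by
  have hγ0 : 0 < γ := by linarith
  obtain ⟨κ, hκ, hgain⟩ := hN.exists_midpoint_gain hmod hc hp hγ0
  have hbound : ∀ n, ∀ t ∈ Ico (0 : ℝ) 1, N (f n t) ≤ γ := fun n t ht =>
    (he _).2.trans (mul_le_of_le_one_right hγ0.le (hball n t ht))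
  have hψ : ∀ z : X, κ / γ ^ p * ‖z‖ ^ p ≤ κ * N z ^ p := fun z =>
    calc κ / γ ^ p * ‖z‖ ^ p ≤ κ / γ ^ p * (γ ^ p * N z ^ p) := by
          gcongr
          exact he.norm_rpow_le hγ0 (by linarith) hN z
      _ = κ * N z ^ p := by field_simp
  refine (summable_nat_add_iff 1).1 <| summable_of_add_mul_le_of_le
    (Φ := fun n => dyadicAvg n fun j => N (f n (j / 2 ^ n)) + N (f n (j / 2 ^ n)) ^ 2)
    (κ := κ / γ ^ p) (B := γ + γ ^ 2) (by positivity)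
    (fun n => setIntegral_nonneg measurableSet_Ico fun t _ => by positivity) (fun n => ?_)
    fun n => dyadicAvg_le fun j hj => ?_
  · simp only [Nat.add_one_ne_zero, if_false, Nat.add_sub_cancel, ← integral_const_mul]
    exact dyadicAvg_add_integral_le hconst hmart (S := {x | N x ≤ γ}) hbound
      (φ := fun x => N x + N x ^ 2) (ψ := fun z => κ / γ ^ p * ‖z‖ ^ p)
      (fun x hx y hy m hm => by linarith [hgain x y m hx hy hm, hψ (x - m), hψ (y - m)]) n
  · have := hbound n _ (dyadicIco_subset_Ico hj (left_mem_dyadicIco n j))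
    have := hN.nonneg_s18 (f n (j / 2 ^ n))
    nlinarith

/-- if some equivalent norm has modulus of convexity `≥ c·t^p`, then every
Walsh–Paley martingale with values in `B_X` satisfies `∑ₙ ∫₀¹ ‖dfₙ‖^p < ∞`. -/
theorem stmt18 {X : Type*} [NormedAddCommGroup X] [NormedSpace ℝ X] [CompleteSpace X]
    (c p : ℝ) (hc : 0 < c) (hp : 2 ≤ p)
    (N : X → ℝ) (hN : IsNormOn X N) (γ : ℝ) (hγ : 1 ≤ γ) (he : EquivNorm γ N)
    (hmod : ∀ t ∈ Ioc (0 : ℝ) 1, convMod N t ≥ c * t ^ p)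
    (f : ℕ → ℝ → X)
    -- `fₙ` is constant on the dyadic intervals of generation `n`
    (hconst : ∀ (n j : ℕ), j < 2 ^ n → ∀ s t : ℝ,
      s ∈ Ico ((j : ℝ) / 2 ^ n) (((j : ℝ) + 1) / 2 ^ n) →
      t ∈ Ico ((j : ℝ) / 2 ^ n) (((j : ℝ) + 1) / 2 ^ n) → f n s = f n t)
    -- the martingale property: `fₙ` is the average of `f_{n+1}` on the two halves
    (hmart : ∀ (n j : ℕ), j < 2 ^ n →
      f n ((j : ℝ) / 2 ^ n) = (2 : ℝ)⁻¹ •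
        (f (n + 1) ((2 * j : ℝ) / 2 ^ (n + 1)) + f (n + 1) ((2 * j + 1 : ℝ) / 2 ^ (n + 1))))
    -- the martingale takes values in the unit ball
    (hball : ∀ n : ℕ, ∀ t ∈ Ico (0 : ℝ) 1, ‖f n t‖ ≤ 1) :
    Summable (fun n : ℕ => ∫ t in Ico (0 : ℝ) 1,
      ‖if n = 0 then f 0 t else f n t - f (n - 1) t‖ ^ p) :=
  stmt18_general c p hc hp N hN γ hγ he hmod f hconst hmart hball
end
end
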